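/- The standardisation map on semistandard domino tableaux: for a standard domino tableau T₀ of shape λ ∈ P⁰(n) and a weight μ = (μ₀, μ₁, ...) with μ₀ = 0 whenever the top-leftmost domino of T₀ is vertical and Des(T₀)\{0} ⊆ set(μ̄) (μ̄ the composition obtained by deleting zero parts of μ), there exists exactly one semistandard domino tableau T of weight μ whose standardisation is T₀. -/

import Mathlib

open scoped Classical

noncomputable section

/-- Two cells of a Young diagram are adjacent (form a possible domino). -/
def dominoAdj (c d : ℕ × ℕ) : Prop :=
  (c.1 = d.1 ∧ (c.2 + 1 = d.2 ∨ d.2 + 1 = c.2)) ∨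
  (c.2 = d.2 ∧ (c.1 + 1 = d.1 ∨ d.1 + 1 = c.1))

/-- `tile` is a tiling of the Young diagram `μ` by dominoes: it is an involution of
the cells of `μ` matching each cell with an adjacent one (and the identity elsewhere). -/
def IsDominoTiling (μ : YoungDiagram) (tile : ℕ × ℕ → ℕ × ℕ) : Prop :=
  (∀ c ∈ μ.cells, tile c ∈ μ.cells ∧ tile (tile c) = c ∧ dominoAdj c (tile c)) ∧
  ∀ c ∉ μ.cells, tile c = c

/-- `(tile, lab)` is a semistandard domino tableau of shape `μ`: a domino tiling of `μ`
with non-negative integer labels (constant on each domino), weakly increasing along rows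
and strictly increasing down columns (where the two cells of a vertical domino do not
count as a column violation). Labels vanish outside `μ`. -/
def IsSSDT (μ : YoungDiagram) (tile : ℕ × ℕ → ℕ × ℕ) (lab : ℕ × ℕ → ℕ) : Prop :=
  IsDominoTiling μ tile ∧
  (∀ c ∈ μ.cells, lab (tile c) = lab c) ∧
  (∀ c ∉ μ.cells, lab c = 0) ∧
  (∀ i j : ℕ, (i, j) ∈ μ.cells → (i, j + 1) ∈ μ.cells → lab (i, j) ≤ lab (i, j + 1)) ∧
  (∀ i j : ℕ, (i, j) ∈ μ.cells → (i + 1, j) ∈ μ.cells → tile (i, j) ≠ (i + 1, j) →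
    lab (i, j) < lab (i + 1, j))

/-- The extra rule on semistandard domino tableaux: if the top-leftmost domino is
vertical then it cannot be labelled `0`. -/
def ZeroRule (μ : YoungDiagram) (tile : ℕ × ℕ → ℕ × ℕ) (lab : ℕ × ℕ → ℕ) : Prop :=
  tile (0, 0) = (1, 0) → lab (0, 0) ≠ 0

/-- `(tile, lab)` is a standard domino tableau of shape `μ` with `n` dominoes:
a semistandard domino tableau in which each label `1, ..., n` is used by exactly
one domino. -/
def IsSDT (μ : YoungDiagram) (n : ℕ) (tile : ℕ × ℕ → ℕ × ℕ) (lab : ℕ × ℕ → ℕ) : Prop :=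
  IsSSDT μ tile lab ∧ (∀ c ∈ μ.cells, 1 ≤ lab c ∧ lab c ≤ n) ∧
  ∀ k, 1 ≤ k → k ≤ n → (μ.cells.filter fun c => lab c = k).card = 2

/-- Descent set of a standard domino tableau, a subset of `{0, 1, ..., n-1}`:
`0` is a descent iff the domino labelled `1` is vertical, and `i > 0` is a descent
iff (a cell of) `i+1` lies strictly below (a cell of) `i`. -/
def sdtDes (μ : YoungDiagram) (n : ℕ) (x : (ℕ × ℕ → ℕ × ℕ) × (ℕ × ℕ → ℕ)) : Finset ℕ :=
  (Finset.range n).filter fun i =>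
    if i = 0 then ∃ c ∈ μ.cells, x.2 c = 1 ∧ (x.1 c).2 = c.2
    else ∃ c ∈ μ.cells, ∃ d ∈ μ.cells, x.2 c = i ∧ x.2 d = i + 1 ∧ c.1 < d.1

/-- The labels of the standardisation of a semistandard domino tableau `x` of shape
`μ`: dominoes are relabelled `1, ..., n` in order of their labels, dominoes of equal
label being taken from left to right. -/
def stdLab (μ : YoungDiagram) (x : (ℕ × ℕ → ℕ × ℕ) × (ℕ × ℕ → ℕ)) (c : ℕ × ℕ) : ℕ :=
  if c ∈ μ.cells then
    (μ.cells.filter fun b => x.2 b < x.2 c ∨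
      (x.2 b = x.2 c ∧ min b.2 (x.1 b).2 < min c.2 (x.1 c).2)).card / 2 + 1
  else 0

/-!
The semistandard tableau is forced: its label on a cell is the index `i` of the block
`(w₀ + ⋯ + w_{i-1}, w₀ + ⋯ + w_i]` of standard labels containing the label of `T₀` there.
Column strictness holds because the standard labels of two vertically adjacent cells in different
dominoes are separated by a descent of `T₀`, hence by a partial sum of `w`. Standardisation
recovers `T₀` because a block contains no descent, so that within a block each domino lies
strictly to the right of the previous one. Conversely, any solution is weakly increasing in the
standard labels, so its cells with label `≤ i` form the initial segment of `T₀` of size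
`2 (w₀ + ⋯ + w_i)`.
-/

open Finset

lemma card_filter_le_eq_sum {α : Type*} (s : Finset α) (f : α → ℕ) (i : ℕ) :
    #{c ∈ s | f c ≤ i} = ∑ j ∈ range (i + 1), #{c ∈ s | f c = j} := by
  rw [card_eq_sum_card_fiberwise (f := f) (t := range (i + 1))]
  · simp only [filter_filter]
    refine sum_congr rfl fun j hj => congrArg card (filter_congr fun c _ => ?_)
    have := mem_range.1 hj
    constructor
    · exact fun h => h.2
    · rintro rfl; exact ⟨by omega, rfl⟩
  · intro c hc
    simp only [coe_filter, Set.mem_ofPred_eq, coe_range, Set.mem_Iio] at hc ⊢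
    omega

lemma card_filter_eq_of_card_filter_le {α : Type*} {s : Finset α} {f : α → ℕ} {g : ℕ → ℕ}
    (h : ∀ i, #{c ∈ s | f c ≤ i} = ∑ j ∈ range (i + 1), g j) (i : ℕ) :
    #{c ∈ s | f c = i} = g i := by
  cases i with
  | zero => simpa [card_filter_le_eq_sum] using h 0
  | succ i =>
    have hi := h i
    have hi' := h (i + 1)
    rw [card_filter_le_eq_sum] at hi hi'
    rw [sum_range_succ, sum_range_succ _ (i + 1)] at hi'
    omega

section Blocks

variable (w : ℕ →₀ ℕ)

def partialSum (i : ℕ) : ℕ := ∑ j ∈ range (i + 1), w j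

/-- The block index `i` with `partialSum w (i - 1) < k ≤ partialSum w i` (junk `0` when `k`
exceeds the total weight). -/
def blockOf (k : ℕ) : ℕ := sInf {i | k ≤ partialSum w i}

variable {w}

lemma partialSum_mono : Monotone (partialSum w) := fun _ _ hab =>
  sum_le_sum_of_subset (range_subset_range.2 (by omega))

lemma partialSum_le_sum (i : ℕ) : partialSum w i ≤ w.sum fun _ m => m := by
  rw [Finsupp.sum, partialSum, ← sum_filter_ne_zero]
  exact sum_le_sum_of_subset fun j hj => Finsupp.mem_support_iff.2 (mem_filter.1 hj).2

lemma exists_le_partialSum {k : ℕ} (hk : k ≤ w.sum fun _ m => m) : ∃ i, k ≤ partialSum w i := by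
  have hsupp : w.support ⊆ range (w.support.sup id + 1) := fun j hj =>
    mem_range.2 (Nat.lt_succ_of_le (le_sup (f := id) hj))
  rw [Finsupp.sum_of_support_subset w hsupp _ fun _ _ => rfl] at hk
  exact ⟨_, hk⟩

lemma blockOf_le {k i : ℕ} (h : k ≤ partialSum w i) : blockOf w k ≤ i := Nat.sInf_le h

lemma le_partialSum_blockOf {k : ℕ} (hk : k ≤ w.sum fun _ m => m) :
    k ≤ partialSum w (blockOf w k) :=
  Nat.sInf_mem (s := {i | k ≤ partialSum w i}) (exists_le_partialSum hk)

lemma blockOf_le_iff {k i : ℕ} (hk : k ≤ w.sum fun _ m => m) :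
    blockOf w k ≤ i ↔ k ≤ partialSum w i :=
  ⟨fun h => (le_partialSum_blockOf hk).trans (partialSum_mono h), blockOf_le⟩

lemma blockOf_zero : blockOf w 0 = 0 := Nat.le_zero.1 (blockOf_le (Nat.zero_le _))

lemma blockOf_mono {k k' : ℕ} (hk : k ≤ k') (hk' : k' ≤ w.sum fun _ m => m) :
    blockOf w k ≤ blockOf w k' :=
  blockOf_le (hk.trans (le_partialSum_blockOf hk'))

end Blocks

section Tableaux

variable {μ : YoungDiagram} {tile : ℕ × ℕ → ℕ × ℕ} {lab : ℕ × ℕ → ℕ} {n : ℕ}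

def minCol (tile : ℕ × ℕ → ℕ × ℕ) (c : ℕ × ℕ) : ℕ := min c.2 (tile c).2

lemma exists_eq_minCol (tile : ℕ × ℕ → ℕ × ℕ) (c : ℕ × ℕ) :
    ∃ c', (c' = c ∨ c' = tile c) ∧ c'.2 = minCol tile c := by
  rcases le_total c.2 (tile c).2 with h | h
  · exact ⟨c, Or.inl rfl, (min_eq_left h).symm⟩
  · exact ⟨tile c, Or.inr rfl, (min_eq_right h).symm⟩

lemma mem_sdtDes_of_ne_zero {x : (ℕ × ℕ → ℕ × ℕ) × (ℕ × ℕ → ℕ)} {k : ℕ} (hk : k ≠ 0) :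
    k ∈ sdtDes μ n x ↔
      k < n ∧ ∃ c ∈ μ.cells, ∃ d ∈ μ.cells, x.2 c = k ∧ x.2 d = k + 1 ∧ c.1 < d.1 := by
  simp [sdtDes, hk]

namespace IsDominoTiling

variable (h : IsDominoTiling μ tile) {c : ℕ × ℕ} (hc : c ∈ μ.cells)
include h hc

lemma tile_mem : tile c ∈ μ.cells := (h.1 c hc).1

lemma tile_tile : tile (tile c) = c := (h.1 c hc).2.1

lemma tile_ne : tile c ≠ c := by
  intro he
  have adj := (h.1 c hc).2.2
  rw [he] at adj
  rcases adj with ⟨_, h2 | h2⟩ | ⟨_, h2 | h2⟩ <;> omega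

lemma minCol_tile : minCol tile (tile c) = minCol tile c := by
  rw [minCol, minCol, h.tile_tile hc, min_comm]

end IsDominoTiling

namespace IsSSDT

variable (h : IsSSDT μ tile lab)
include h

lemma lab_row_mono {i j j' : ℕ} (hj : j ≤ j') (hc : (i, j') ∈ μ.cells) :
    lab (i, j) ≤ lab (i, j') := by
  induction j', hj using Nat.le_induction with
  | base => exact le_rfl
  | succ m _ ih =>
    have hm : (i, m) ∈ μ.cells := μ.up_left_mem le_rfl (Nat.le_succ m) hc
    exact (ih hm).trans (h.2.2.2.1 i m hm hc)

lemma lab_col_mono {i i' j : ℕ} (hi : i ≤ i') (hc : (i', j) ∈ μ.cells) :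
    lab (i, j) ≤ lab (i', j) := by
  induction i', hi using Nat.le_induction with
  | base => exact le_rfl
  | succ m _ ih =>
    have hm : (m, j) ∈ μ.cells := μ.up_left_mem (Nat.le_succ m) le_rfl hc
    refine (ih hm).trans ?_
    by_cases ht : tile (m, j) = (m + 1, j)
    · rw [← ht, h.2.1 _ hm]
    · exact (h.2.2.2.2 m j hm hc ht).le

lemma lab_le_lab_of_le {c d : ℕ × ℕ} (h1 : d.1 ≤ c.1) (h2 : d.2 ≤ c.2) (hc : c ∈ μ.cells) :
    lab d ≤ lab c :=
  (h.lab_row_mono h2 (μ.up_left_mem h1 le_rfl hc)).trans (h.lab_col_mono h1 hc)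

end IsSSDT

namespace IsSDT

variable (h : IsSDT μ n tile lab)
include h

lemma exists_lab_eq {k : ℕ} (h1 : 1 ≤ k) (h2 : k ≤ n) : ∃ c ∈ μ.cells, lab c = k := by
  obtain ⟨c, hc⟩ := card_pos.1 (show 0 < #{c ∈ μ.cells | lab c = k} by rw [h.2.2 k h1 h2]; omega)
  exact ⟨c, (mem_filter.1 hc).1, (mem_filter.1 hc).2⟩

lemma filter_lab_eq {c : ℕ × ℕ} (hc : c ∈ μ.cells) :
    {b ∈ μ.cells | lab b = lab c} = {c, tile c} := by
  have hsub : ({c, tile c} : Finset (ℕ × ℕ)) ⊆ {b ∈ μ.cells | lab b = lab c} :=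
    insert_subset_iff.2 ⟨mem_filter.2 ⟨hc, rfl⟩,
      singleton_subset_iff.2 (mem_filter.2 ⟨h.1.1.tile_mem hc, h.1.2.1 c hc⟩)⟩
  refine (eq_of_subset_of_card_le hsub ?_).symm
  rw [h.2.2 _ (h.2.1 c hc).1 (h.2.1 c hc).2,
    card_insert_of_notMem (by simpa using (h.1.1.tile_ne hc).symm), card_singleton]

lemma eq_or_eq_tile_of_lab_eq {b c : ℕ × ℕ} (hb : b ∈ μ.cells) (hc : c ∈ μ.cells)
    (he : lab b = lab c) : b = c ∨ b = tile c := by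
  have : b ∈ {b ∈ μ.cells | lab b = lab c} := mem_filter.2 ⟨hb, he⟩
  simpa [h.filter_lab_eq hc] using this

lemma card_filter_lab_le {m : ℕ} (hm : m ≤ n) : #{c ∈ μ.cells | lab c ≤ m} = 2 * m := by
  rw [card_filter_le_eq_sum, sum_range_succ']
  have h0 : #{c ∈ μ.cells | lab c = 0} = 0 :=
    card_eq_zero.2 (filter_eq_empty_iff.2 fun c hc => by have := (h.2.1 c hc).1; omega)
  rw [h0, sum_congr rfl fun j hj => h.2.2 (j + 1) (by omega) (by have := mem_range.1 hj; omega)]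
  simp [mul_comm]

lemma eq_filter_lab_le_of_card {s : Finset (ℕ × ℕ)} {m : ℕ} (hm : m ≤ n) (hs : s ⊆ μ.cells)
    (hdown : ∀ c ∈ s, ∀ b ∈ μ.cells, lab b ≤ lab c → b ∈ s) (hcard : #s = 2 * m) :
    s = {c ∈ μ.cells | lab c ≤ m} := by
  refine eq_of_subset_of_card_le (fun c hc => mem_filter.2 ⟨hs hc, ?_⟩)
    (by rw [hcard, h.card_filter_lab_le hm])
  have hle := card_le_card fun b hb => hdown c hc b (mem_filter.1 hb).1 (mem_filter.1 hb).2
  rw [h.card_filter_lab_le (h.2.1 c (hs hc)).2] at hle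
  omega

lemma exists_lab_eq_row_ge_of_no_descent {a : ℕ} (ha : 1 ≤ a) {e : ℕ × ℕ} (he : e ∈ μ.cells)
    (hae : a ≤ lab e) (hnd : ∀ k, a ≤ k → k < lab e → k ∉ sdtDes μ n (tile, lab)) :
    ∃ f ∈ μ.cells, lab f = a ∧ e.1 ≤ f.1 := by
  generalize hb : lab e = b at hae hnd
  induction b, hae using Nat.le_induction generalizing e with
  | base => exact ⟨e, he, hb, le_rfl⟩
  | succ b hab ih =>
    have hbn : b < n := by have := (h.2.1 e he).2; omega
    obtain ⟨d, hd, hdb⟩ := h.exists_lab_eq (by omega) hbn.le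
    have hed : e.1 ≤ d.1 := by
      by_contra hlt
      refine hnd b hab (by omega) ((mem_sdtDes_of_ne_zero (by omega)).2 ?_)
      exact ⟨hbn, d, hd, e, he, hdb, hb, by omega⟩
    obtain ⟨f, hf, hfa, hdf⟩ := ih hd hdb fun k h1 h2 => hnd k h1 (by omega)
    exact ⟨f, hf, hfa, hed.trans hdf⟩

lemma exists_mem_sdtDes_between_column_neighbours {i j : ℕ} (h1 : (i, j) ∈ μ.cells)
    (h2 : (i + 1, j) ∈ μ.cells) (ht : tile (i, j) ≠ (i + 1, j)) :
    ∃ k ∈ sdtDes μ n (tile, lab), lab (i, j) ≤ k ∧ k < lab (i + 1, j) := by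
  by_contra hcon
  push Not at hcon
  obtain ⟨f, hf, hfl, hif⟩ := h.exists_lab_eq_row_ge_of_no_descent (h.2.1 _ h1).1 h2
    (h.1.2.2.2.2 i j h1 h2 ht).le fun k hk1 hk2 hk => by have := hcon k hk hk1; omega
  rcases h.eq_or_eq_tile_of_lab_eq hf h1 hfl with rfl | rfl
  · simp at hif
  · rcases (h.1.1.1 _ h1).2.2 with ⟨hi, -⟩ | ⟨hj, hi | hi⟩
    · simp only at hi hif; omega
    · exact ht (Prod.ext hi.symm hj.symm)
    · simp only at hi hif; omega

lemma minCol_lt_of_no_descent {b c : ℕ × ℕ} (hb : b ∈ μ.cells) (hc : c ∈ μ.cells)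
    (hlt : lab b < lab c) (hnd : ∀ k, lab b ≤ k → k < lab c → k ∉ sdtDes μ n (tile, lab)) :
    minCol tile b < minCol tile c := by
  obtain ⟨c', hc', hcol⟩ := exists_eq_minCol tile c
  have hc'm : c' ∈ μ.cells ∧ lab c' = lab c := by
    rcases hc' with rfl | rfl
    · exact ⟨hc, rfl⟩
    · exact ⟨h.1.1.tile_mem hc, h.1.2.1 c hc⟩
  obtain ⟨f, hf, hfl, hrow⟩ := h.exists_lab_eq_row_ge_of_no_descent (h.2.1 b hb).1 hc'm.1
    (hc'm.2 ▸ hlt.le) (hc'm.2 ▸ hnd)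
  have hfcol : f.2 < c'.2 := by
    -- otherwise `c'` lies weakly north-west of `f`, forcing `lab c ≤ lab b`
    by_contra hle
    have := h.1.lab_le_lab_of_le hrow (by omega) hf
    omega
  have hbf : minCol tile b ≤ f.2 := by
    rcases h.eq_or_eq_tile_of_lab_eq hf hb hfl with rfl | rfl
    · exact min_le_left _ _
    · exact min_le_right _ _
  omega

end IsSDT

end Tableaux

section Standardisation

variable {μ : YoungDiagram} {x : (ℕ × ℕ → ℕ × ℕ) × (ℕ × ℕ → ℕ)}

def stdKey (x : (ℕ × ℕ → ℕ × ℕ) × (ℕ × ℕ → ℕ)) (c : ℕ × ℕ) : ℕ ×ₗ ℕ :=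
  toLex (x.2 c, minCol x.1 c)

lemma stdLab_eq_card {c : ℕ × ℕ} (hc : c ∈ μ.cells) :
    stdLab μ x c = #{b ∈ μ.cells | stdKey x b < stdKey x c} / 2 + 1 := by
  simp only [stdLab, if_pos hc, stdKey, Prod.Lex.toLex_lt_toLex, minCol]

lemma stdKey_tile (h : IsDominoTiling μ x.1) (hconst : ∀ c ∈ μ.cells, x.2 (x.1 c) = x.2 c)
    {c : ℕ × ℕ} (hc : c ∈ μ.cells) : stdKey x (x.1 c) = stdKey x c := by
  rw [stdKey, stdKey, hconst c hc, h.minCol_tile hc]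

lemma stdLab_lt_stdLab (h : IsDominoTiling μ x.1) (hconst : ∀ c ∈ μ.cells, x.2 (x.1 c) = x.2 c)
    {b c : ℕ × ℕ} (hb : b ∈ μ.cells) (hc : c ∈ μ.cells) (hlt : stdKey x b < stdKey x c) :
    stdLab μ x b < stdLab μ x c := by
  have hkey := stdKey_tile h hconst hb
  have hsub : insert b (insert (x.1 b) {a ∈ μ.cells | stdKey x a < stdKey x b}) ⊆
      {a ∈ μ.cells | stdKey x a < stdKey x c} := by
    simp only [insert_subset_iff, mem_filter]
    exact ⟨⟨hb, hlt⟩, ⟨h.tile_mem hb, hkey ▸ hlt⟩,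
      fun a ha => mem_filter.2 ⟨(mem_filter.1 ha).1, (mem_filter.1 ha).2.trans hlt⟩⟩
  have hcard := card_le_card hsub
  rw [card_insert_of_notMem, card_insert_of_notMem] at hcard
  · rw [stdLab_eq_card hb, stdLab_eq_card hc]
    omega
  · simp [hkey]
  · simp [(h.tile_ne hb).symm]

lemma stdLab_eq_of_stdKey_lt_iff {n : ℕ} {lab : ℕ × ℕ → ℕ} (hT : IsSDT μ n x.1 lab)
    (hkey : ∀ b ∈ μ.cells, ∀ c ∈ μ.cells, stdKey x b < stdKey x c ↔ lab b < lab c)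
    (c : ℕ × ℕ) : stdLab μ x c = lab c := by
  by_cases hc : c ∈ μ.cells
  · obtain ⟨h1, hn⟩ := hT.2.1 c hc
    rw [stdLab_eq_card hc,
      filter_congr fun b hb => (hkey b hb c hc).trans (Nat.lt_iff_le_pred h1),
      hT.card_filter_lab_le (by omega)]
    omega
  · rw [stdLab, if_neg hc, hT.1.2.2.1 c hc]

end Standardisation

lemma blockOf_lt_of_mem_sdtDes {μ : YoungDiagram} {n : ℕ}
    {x : (ℕ × ℕ → ℕ × ℕ) × (ℕ × ℕ → ℕ)} {w : ℕ →₀ ℕ}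
    (hdes : ∀ k ∈ sdtDes μ n x, k ≠ 0 → ∃ m, k = partialSum w m) {a b k : ℕ}
    (hk : k ∈ sdtDes μ n x) (hk0 : k ≠ 0) (hak : a ≤ k) (hkb : k < b)
    (hb : b ≤ w.sum fun _ m => m) : blockOf w a < blockOf w b := by
  obtain ⟨m, rfl⟩ := hdes k hk hk0
  have ha : blockOf w a ≤ m := blockOf_le hak
  have hbm : ¬ blockOf w b ≤ m := fun hle => by
    have := (blockOf_le_iff hb).1 hle
    omega
  omega

namespace IsSDT

variable {μ : YoungDiagram} {n : ℕ} {tile : ℕ × ℕ → ℕ × ℕ} {lab : ℕ × ℕ → ℕ} {w : ℕ →₀ ℕ}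
  (h : IsSDT μ n tile lab) (hw : w.sum (fun _ m => m) = n)
include h hw

lemma lab_le_sum {c : ℕ × ℕ} (hc : c ∈ μ.cells) : lab c ≤ w.sum fun _ m => m :=
  hw ▸ (h.2.1 c hc).2

lemma isSSDT_blockOf (hdes : ∀ k ∈ sdtDes μ n (tile, lab), k ≠ 0 → ∃ m, k = partialSum w m) :
    IsSSDT μ tile fun c => blockOf w (lab c) := by
  refine ⟨h.1.1, fun c hc => congrArg (blockOf w) (h.1.2.1 c hc),
    fun c hc => (congrArg (blockOf w) (h.1.2.2.1 c hc)).trans blockOf_zero,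
    fun i j h1 h2 => blockOf_mono (h.1.2.2.2.1 i j h1 h2) (h.lab_le_sum hw h2),
    fun i j h1 h2 ht => ?_⟩
  obtain ⟨k, hk, hik, hki⟩ := h.exists_mem_sdtDes_between_column_neighbours h1 h2 ht
  exact blockOf_lt_of_mem_sdtDes hdes hk (by have := (h.2.1 _ h1).1; omega) hik hki
    (h.lab_le_sum hw h2)

lemma zeroRule_blockOf (hzero : tile (0, 0) = (1, 0) → w 0 = 0) :
    ZeroRule μ tile fun c => blockOf w (lab c) := by
  intro hv h0
  have h00 : (0, 0) ∈ μ.cells := by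
    by_contra hn
    rw [h.1.1.2 _ hn] at hv
    simp at hv
  have := (blockOf_le_iff (h.lab_le_sum hw h00)).1 h0.le
  simp only [partialSum, zero_add, range_one, sum_singleton, hzero hv] at this
  have := (h.2.1 _ h00).1
  omega

lemma card_filter_blockOf_eq (i : ℕ) :
    #{c ∈ μ.cells | blockOf w (lab c) = i} = 2 * w i := by
  refine card_filter_eq_of_card_filter_le (g := fun j => 2 * w j) (fun i => ?_) i
  rw [← mul_sum, filter_congr fun c hc => blockOf_le_iff (h.lab_le_sum hw hc),
    h.card_filter_lab_le (hw ▸ partialSum_le_sum i), partialSum]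

lemma stdLab_blockOf (hdes : ∀ k ∈ sdtDes μ n (tile, lab), k ≠ 0 → ∃ m, k = partialSum w m)
    (c : ℕ × ℕ) : stdLab μ (tile, fun c => blockOf w (lab c)) c = lab c := by
  have hlt : ∀ b ∈ μ.cells, ∀ d ∈ μ.cells, lab b < lab d →
      stdKey (tile, fun c => blockOf w (lab c)) b <
        stdKey (tile, fun c => blockOf w (lab c)) d := by
    intro b hb d hd hbd
    rw [stdKey, stdKey, Prod.Lex.toLex_lt_toLex]
    rcases (blockOf_mono hbd.le (h.lab_le_sum hw hd)).eq_or_lt with heq | hlt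
    · refine Or.inr ⟨heq, h.minCol_lt_of_no_descent hb hd hbd fun k hbk hkd hk => ?_⟩
      exact (blockOf_lt_of_mem_sdtDes hdes hk (by have := (h.2.1 b hb).1; omega) hbk hkd
        (h.lab_le_sum hw hd)).ne heq
    · exact Or.inl hlt
  refine stdLab_eq_of_stdKey_lt_iff h (fun b hb d hd => ⟨fun hkey => ?_, hlt b hb d hd⟩) c
  by_contra hdb
  rcases (not_lt.1 hdb).eq_or_lt with heq | hdb
  · rcases h.eq_or_eq_tile_of_lab_eq hb hd heq.symm with rfl | rfl
    · exact lt_irrefl _ hkey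
    · rw [stdKey_tile h.1.1 (h.isSSDT_blockOf hw hdes).2.1 hd] at hkey
      exact lt_irrefl _ hkey
  · exact lt_asymm hkey (hlt d hd b hb hdb)

lemma eq_blockOf_of_stdLab_eq {lab' : ℕ × ℕ → ℕ} (h' : IsSSDT μ tile lab')
    (hwt : ∀ i, #{c ∈ μ.cells | lab' c = i} = 2 * w i)
    (hstd : ∀ c, stdLab μ (tile, lab') c = lab c) : lab' = fun c => blockOf w (lab c) := by
  have hmono : ∀ b ∈ μ.cells, ∀ c ∈ μ.cells, lab b ≤ lab c → lab' b ≤ lab' c := by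
    intro b hb c hc hbc
    rcases hbc.eq_or_lt with heq | hlt
    · rcases h.eq_or_eq_tile_of_lab_eq hb hc heq with rfl | rfl
      · exact le_rfl
      · exact (h'.2.1 c hc).le
    · by_contra hcb
      have := stdLab_lt_stdLab (x := (tile, lab')) h'.1 h'.2.1 hc hb
        (Prod.Lex.toLex_lt_toLex.2 (Or.inl (show lab' c < lab' b by omega)))
      rw [hstd, hstd] at this
      omega
  have hcum : ∀ i, {c ∈ μ.cells | lab' c ≤ i} = {c ∈ μ.cells | lab c ≤ partialSum w i} :=
    fun i => h.eq_filter_lab_le_of_card (hw ▸ partialSum_le_sum i) (filter_subset _ _)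
      (fun c hc b hb hbc => mem_filter.2 ⟨hb, (hmono b hb c (mem_filter.1 hc).1 hbc).trans
        (mem_filter.1 hc).2⟩)
      (by rw [card_filter_le_eq_sum, sum_congr rfl fun j _ => hwt j, ← mul_sum, partialSum])
  funext c
  by_cases hc : c ∈ μ.cells
  · refine eq_of_forall_ge_iff fun i => ?_
    rw [blockOf_le_iff (h.lab_le_sum hw hc)]
    simpa [hc] using congrArg (c ∈ ·) (hcum i)
  · rw [h'.2.2.1 c hc, h.1.2.2.1 c hc, blockOf_zero]

end IsSDT

theorem stmt18_general (n : ℕ) (μ : YoungDiagram)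
    (t₀ : (ℕ × ℕ → ℕ × ℕ) × (ℕ × ℕ → ℕ)) (hT₀ : IsSDT μ n t₀.1 t₀.2)
    (w : ℕ →₀ ℕ) (hw : w.sum (fun _ m => m) = n)
    (hzero : t₀.1 (0, 0) = (1, 0) → w 0 = 0)
    (hdes : ∀ k ∈ sdtDes μ n t₀, k ≠ 0 →
      ∃ m : ℕ, k = ∑ i ∈ Finset.range (m + 1), w i) :
    ∃! x : (ℕ × ℕ → ℕ × ℕ) × (ℕ × ℕ → ℕ),
      (IsSSDT μ x.1 x.2 ∧ ZeroRule μ x.1 x.2 ∧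
        (∀ i, (μ.cells.filter fun c => x.2 c = i).card = 2 * w i)) ∧
      x.1 = t₀.1 ∧ (∀ c, stdLab μ x c = t₀.2 c) := by
  refine ⟨(t₀.1, fun c => blockOf w (t₀.2 c)), ⟨⟨hT₀.isSSDT_blockOf hw hdes,
    hT₀.zeroRule_blockOf hw hzero, hT₀.card_filter_blockOf_eq hw⟩, rfl,
    hT₀.stdLab_blockOf hw hdes⟩, ?_⟩
  rintro ⟨tile, lab⟩ ⟨⟨hS, -, hW⟩, rfl, hstd⟩
  exact Prod.ext rfl (hT₀.eq_blockOf_of_stdLab_eq hw hS hW hstd)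

/-- Given a standard domino tableau `T₀` of shape `μ ∈ P⁰(n)` and a weight
`w = (w₀, w₁, ...)` summing to `n` with `w₀ = 0` whenever the top-leftmost domino of
`T₀` is vertical, and `Des(T₀) \ {0}` contained in the partial sums of `w`, there is
exactly one semistandard domino tableau of weight `w` whose standardisation is `T₀`. -/
theorem stmt18 (n : ℕ) (hn : 1 ≤ n) (μ : YoungDiagram) (h2n : μ.cells.card = 2 * n)
    (t₀ : (ℕ × ℕ → ℕ × ℕ) × (ℕ × ℕ → ℕ)) (hT₀ : IsSDT μ n t₀.1 t₀.2)
    (w : ℕ →₀ ℕ) (hw : w.sum (fun _ m => m) = n)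
    (hzero : t₀.1 (0, 0) = (1, 0) → w 0 = 0)
    (hdes : ∀ k ∈ sdtDes μ n t₀, k ≠ 0 →
      ∃ m : ℕ, k = ∑ i ∈ Finset.range (m + 1), w i) :
    ∃! x : (ℕ × ℕ → ℕ × ℕ) × (ℕ × ℕ → ℕ),
      (IsSSDT μ x.1 x.2 ∧ ZeroRule μ x.1 x.2 ∧
        (∀ i, (μ.cells.filter fun c => x.2 c = i).card = 2 * w i)) ∧
      x.1 = t₀.1 ∧ (∀ c, stdLab μ x c = t₀.2 c) :=
  stmt18_general n μ t₀ hT₀ w hw hzero hdes
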